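/- An integrably bounded set-valued random variable F with nonempty closed convex values in a separable Banach space whose Aumann expectation E[F] = cl{∫ f dP : f ∈ S_F} is a singleton must be a.s. single-valued (F(ω) is a singleton for a.e. ω). -/

import Mathlib

open MeasureTheory Set Filter Topology Bornology
open scoped ENNReal NNReal Pointwise

noncomputable section

/-- A set-valued random variable w.r.t. the σ-algebra `𝒜`: nonempty closed values and
measurability of hitting sets of closed sets. -/
def IsSVRV {Ω X : Type*} [TopologicalSpace X] (𝒜 : MeasurableSpace Ω) (F : Ω → Set X) : Prop :=
  (∀ ω, (F ω).Nonempty ∧ IsClosed (F ω)) ∧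
    ∀ C : Set X, IsClosed C → MeasurableSet[𝒜] {ω | (F ω ∩ C).Nonempty}

/-- The set `S^p_F(𝒜)` of `𝒜`-measurable `p`-integrable selections of `F`,
as a subset of `Lp X p μ`. -/
def sel {Ω X : Type*} {m : MeasurableSpace Ω} [NormedAddCommGroup X]
    (𝒜 : MeasurableSpace Ω) (μ : @MeasureTheory.Measure Ω m) (p : ℝ≥0∞) (F : Ω → Set X) :
    Set (Lp X p μ) :=
  {f | AEStronglyMeasurable[𝒜] f μ ∧ ∀ᵐ ω ∂μ, f ω ∈ F ω}

/-- Decomposability of a family of `Lp` functions w.r.t. the σ-algebra `𝒜`: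
`1_A f₁ + 1_{Ω∖A} f₂ ∈ M` for all `f₁ f₂ ∈ M` and `A` `𝒜`-measurable. -/
def Decomp {Ω X : Type*} {m : MeasurableSpace Ω} [NormedAddCommGroup X]
    (𝒜 : MeasurableSpace Ω) (μ : @MeasureTheory.Measure Ω m) (p : ℝ≥0∞)
    (M : Set (Lp X p μ)) : Prop :=
  ∀ f₁ ∈ M, ∀ f₂ ∈ M, ∀ A : Set Ω, MeasurableSet[𝒜] A →
    ∃ g ∈ M, ∀ᵐ ω ∂μ, (ω ∈ A → g ω = f₁ ω) ∧ (ω ∉ A → g ω = f₂ ω)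

/-- The closed decomposable hull of `M` in `Lp X p μ`, w.r.t. the σ-algebra `𝒜`:
the smallest closed `𝒜`-decomposable set containing `M`. -/
def decClosure {Ω X : Type*} {m : MeasurableSpace Ω} [NormedAddCommGroup X]
    (𝒜 : MeasurableSpace Ω) (μ : @MeasureTheory.Measure Ω m) (p : ℝ≥0∞) [Fact (1 ≤ p)]
    (M : Set (Lp X p μ)) : Set (Lp X p μ) :=
  ⋂₀ {N : Set (Lp X p μ) | M ⊆ N ∧ IsClosed N ∧ Decomp 𝒜 μ p N}

/-- The set of conditional expectations `E[f|𝒜]` of members `f` of `M ⊆ Lp X p μ`. -/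
def ceSel {Ω X : Type*} {m : MeasurableSpace Ω} [NormedAddCommGroup X]
    [NormedSpace ℝ X] [CompleteSpace X]
    (𝒜 : MeasurableSpace Ω) (μ : @MeasureTheory.Measure Ω m) (p : ℝ≥0∞)
    (M : Set (Lp X p μ)) : Set (Lp X p μ) :=
  {h | ∃ f ∈ M, ⇑h =ᵐ[μ] μ[(⇑f)|𝒜]}

/-- Set-valued `𝔽`-submartingale (Hiai–Umegaki), expressed through the selection
characterization of the set-valued conditional expectation:
`S_{F_s}(ℱ s) ⊆ S_{E[F_t|ℱ s]}(ℱ s) = cl{E[f|ℱ s] : f ∈ S_{F_t}(ℱ t)}`. -/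
def SVSubmartingale {Ω X ι : Type*} [Preorder ι] {m : MeasurableSpace Ω}
    [NormedAddCommGroup X] [NormedSpace ℝ X] [CompleteSpace X]
    (ℱ : MeasureTheory.Filtration ι m) (μ : @MeasureTheory.Measure Ω m) (p : ℝ≥0∞)
    [Fact (1 ≤ p)] (F : ι → Ω → Set X) : Prop :=
  ∀ s t : ι, s ≤ t →
    sel (ℱ s) μ p (F s) ⊆ closure (ceSel (ℱ s) μ p (sel (ℱ t) μ p (F t)))

/-- Set-valued `𝔽`-martingale (Hiai–Umegaki), via the selection characterization
`S_{F_s}(ℱ s) = S_{E[F_t|ℱ s]}(ℱ s) = cl{E[f|ℱ s] : f ∈ S_{F_t}(ℱ t)}`. -/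
def SVMartingale {Ω X ι : Type*} [Preorder ι] {m : MeasurableSpace Ω}
    [NormedAddCommGroup X] [NormedSpace ℝ X] [CompleteSpace X]
    (ℱ : MeasureTheory.Filtration ι m) (μ : @MeasureTheory.Measure Ω m) (p : ℝ≥0∞)
    [Fact (1 ≤ p)] (F : ι → Ω → Set X) : Prop :=
  ∀ s t : ι, s ≤ t →
    sel (ℱ s) μ p (F s) = closure (ceSel (ℱ s) μ p (sel (ℱ t) μ p (F t)))

/-- The Aumann expectation `E[F] = cl{∫ f dμ : f ∈ S¹_F}` of a set-valued random variable. -/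
def aumannExp {Ω X : Type*} {m : MeasurableSpace Ω} [NormedAddCommGroup X]
    [NormedSpace ℝ X] [CompleteSpace X]
    (μ : @MeasureTheory.Measure Ω m) (F : Ω → Set X) : Set X :=
  closure {x | ∃ f ∈ sel m μ 1 F, ∫ ω, f ω ∂μ = x}

/-- Reflexivity of a normed space: the canonical embedding into the double dual
is surjective. -/
def IsReflexive (X : Type*) [NormedAddCommGroup X] [NormedSpace ℝ X] : Prop :=
  Function.Surjective ⇑(NormedSpace.inclusionInDoubleDual ℝ X)

lemma krn_selection {Ω X : Type*} {m : MeasurableSpace Ω}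
    [NormedAddCommGroup X] [CompleteSpace X] [TopologicalSpace.SeparableSpace X]
    [MeasurableSpace X] [BorelSpace X]
    (G : Ω → Set X) (hne : ∀ ω, (G ω).Nonempty) (hcl : ∀ ω, IsClosed (G ω))
    (hmeas : ∀ C : Set X, IsClosed C → MeasurableSet {ω | (G ω ∩ C).Nonempty}) :
    ∃ h : Ω → X, StronglyMeasurable h ∧ ∀ ω, h ω ∈ G ω := by
  cases isEmpty_or_nonempty Ω with
  | inl hΩ =>
    exact ⟨fun ω => (hne ω).some, StronglyMeasurable.of_subsingleton_dom,
      fun ω => (hne ω).some_mem⟩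
  | inr hΩ =>
  classical
  have hX : Nonempty X := ⟨(hne (Classical.arbitrary Ω)).some⟩
  haveI : SecondCountableTopology X := UniformSpace.secondCountable_of_separable X
  set e := TopologicalSpace.denseSeq X with he_def
  have he : DenseRange e := TopologicalSpace.denseRange_denseSeq X
  set r : ℕ → ℝ := fun k => (1/2 : ℝ)^k with hr_def
  have hrpos : ∀ k, 0 < r k := fun k => by positivity
  have claim0 : ∀ ω, ∃ j, (G ω ∩ Metric.closedBall (e j) (r 0)).Nonempty := by
    intro ω
    obtain ⟨x, hx⟩ := hne ω
    obtain ⟨j, hj⟩ := he.exists_dist_lt x (hrpos 0)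
    exact ⟨j, x, hx, by rw [Metric.mem_closedBall]; exact hj.le⟩
  have claimS : ∀ (k : ℕ) (ω : Ω) (j : ℕ),
      (G ω ∩ Metric.closedBall (e j) (r k)).Nonempty →
      ∃ j', (G ω ∩ Metric.closedBall (e j') (r (k+1))).Nonempty ∧
        dist (e j') (e j) ≤ r k + r (k+1) := by
    rintro k ω j ⟨x, hxG, hxB⟩
    obtain ⟨j', hj'⟩ := he.exists_dist_lt x (hrpos (k+1))
    refine ⟨j', ⟨x, hxG, by rw [Metric.mem_closedBall]; exact hj'.le⟩, ?_⟩
    calc dist (e j') (e j) ≤ dist (e j') x + dist x (e j) := dist_triangle _ _ _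
      _ ≤ r (k+1) + r k := add_le_add (by rw [dist_comm] at hj'; exact hj'.le) hxB
      _ = r k + r (k+1) := add_comm _ _
  let g : ∀ _ : ℕ, {f : Ω → ℕ // ∀ ω, (G ω ∩ Metric.closedBall (e (f ω)) (r _)).Nonempty} :=
    fun k => Nat.rec (motive := fun k => {f : Ω → ℕ //
        ∀ ω, (G ω ∩ Metric.closedBall (e (f ω)) (r k)).Nonempty})
      ⟨fun ω => Nat.find (claim0 ω), fun ω => Nat.find_spec (claim0 ω)⟩
      (fun k p => ⟨fun ω => Nat.find (claimS k ω (p.1 ω) (p.2 ω)),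
        fun ω => (Nat.find_spec (claimS k ω (p.1 ω) (p.2 ω))).1⟩) k
  have hgsucc : ∀ k ω, (g (k+1)).1 ω = Nat.find (claimS k ω ((g k).1 ω) ((g k).2 ω)) :=
    fun k ω => rfl
  have hstep : ∀ k ω, dist (e ((g (k+1)).1 ω)) (e ((g k).1 ω)) ≤ r k + r (k+1) := by
    intro k ω
    rw [hgsucc k ω]
    exact (Nat.find_spec (claimS k ω ((g k).1 ω) ((g k).2 ω))).2
  have hnatmeas : ∀ (s : Set ℕ), MeasurableSet s := fun s => MeasurableSpace.measurableSet_top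
  have hg : ∀ k, Measurable ((g k).1) := by
    intro k
    induction k with
    | zero =>
      apply measurable_to_countable'
      intro j
      have heq : (g 0).1 ⁻¹' {j} =
          {ω | (G ω ∩ Metric.closedBall (e j) (r 0)).Nonempty} ∩
          ⋂ i, ⋂ _ : i < j, {ω | (G ω ∩ Metric.closedBall (e i) (r 0)).Nonempty}ᶜ := by
        ext ω
        simp only [Set.mem_preimage, Set.mem_singleton_iff, Set.mem_inter_iff,
          Set.mem_iInter, Set.mem_setOf_eq, Set.mem_compl_iff]
        exact Nat.find_eq_iff (claim0 ω)
      rw [heq]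
      exact (hmeas _ Metric.isClosed_closedBall).inter
        (MeasurableSet.iInter fun i => MeasurableSet.iInter fun _ =>
          (hmeas _ Metric.isClosed_closedBall).compl)
    | succ k ih =>
      apply measurable_to_countable'
      intro j
      have hAm : ∀ i : ℕ, MeasurableSet {ω | (G ω ∩ Metric.closedBall (e i) (r (k+1))).Nonempty ∧
          dist (e i) (e ((g k).1 ω)) ≤ r k + r (k+1)} := by
        intro i
        refine (hmeas _ Metric.isClosed_closedBall).inter ?_
        exact ih (hnatmeas {n | dist (e i) (e n) ≤ r k + r (k+1)})
      have heq : (g (k+1)).1 ⁻¹' {j} =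
          {ω | (G ω ∩ Metric.closedBall (e j) (r (k+1))).Nonempty ∧
            dist (e j) (e ((g k).1 ω)) ≤ r k + r (k+1)} ∩
          ⋂ i, ⋂ _ : i < j, {ω | (G ω ∩ Metric.closedBall (e i) (r (k+1))).Nonempty ∧
            dist (e i) (e ((g k).1 ω)) ≤ r k + r (k+1)}ᶜ := by
        ext ω
        simp only [Set.mem_preimage, Set.mem_singleton_iff, Set.mem_inter_iff,
          Set.mem_iInter, Set.mem_setOf_eq, Set.mem_compl_iff, hgsucc k ω]
        exact Nat.find_eq_iff (claimS k ω ((g k).1 ω) ((g k).2 ω))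
      rw [heq]
      exact (hAm j).inter
        (MeasurableSet.iInter fun i => MeasurableSet.iInter fun _ => (hAm i).compl)
  set f : ℕ → Ω → X := fun k ω => e ((g k).1 ω) with hf_def
  have hfm : ∀ k, StronglyMeasurable (f k) :=
    fun k => (measurable_from_top.comp (hg k)).stronglyMeasurable
  have hcau : ∀ ω, CauchySeq (fun k => f k ω) := by
    intro ω
    apply cauchySeq_of_le_geometric (1/2 : ℝ) (3/2 : ℝ) (by norm_num)
    intro n
    have := hstep n ω
    rw [dist_comm] at this
    refine this.trans (le_of_eq ?_)
    simp only [hr_def]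
    ring
  have hlim : ∀ ω, ∃ x : X, Tendsto (fun k => f k ω) atTop (𝓝 x) :=
    fun ω => cauchySeq_tendsto_of_complete (hcau ω)
  choose h hh using hlim
  refine ⟨h, ?_, ?_⟩
  · exact stronglyMeasurable_of_tendsto atTop hfm (tendsto_pi_nhds.mpr hh)
  · intro ω
    have key : ∀ k, Metric.infDist (h ω) (G ω) ≤ dist (h ω) (f k ω) + r k := by
      intro k
      obtain ⟨x, hxG, hxB⟩ := (g k).2 ω
      calc Metric.infDist (h ω) (G ω) ≤ dist (h ω) x := Metric.infDist_le_dist_of_mem hxG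
        _ ≤ dist (h ω) (f k ω) + dist (f k ω) x := dist_triangle _ _ _
        _ ≤ dist (h ω) (f k ω) + r k := by
            rw [Metric.mem_closedBall] at hxB
            exact add_le_add_right (by rw [dist_comm]; exact hxB) _
    have h1 : Tendsto (fun k => dist (h ω) (f k ω) + r k) atTop (𝓝 0) := by
      have h2 : Tendsto (fun k => dist (h ω) (f k ω)) atTop (𝓝 0) := by
        simpa [dist_comm] using (hh ω).dist (tendsto_const_nhds (x := h ω))
      have h3 : Tendsto r atTop (𝓝 0) :=
        tendsto_pow_atTop_nhds_zero_of_lt_one (by norm_num) (by norm_num)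
      simpa using h2.add h3
    have : Metric.infDist (h ω) (G ω) ≤ 0 := ge_of_tendsto' h1 key
    have hid : Metric.infDist (h ω) (G ω) = 0 :=
      le_antisymm this Metric.infDist_nonneg
    exact ((hcl ω).mem_iff_infDist_zero (hne ω)).mpr hid

/-- Molchanov, Thm 2.1.72: an integrably bounded set-valued random
variable with nonempty closed convex values whose Aumann expectation is a singleton is
a.s. single-valued. -/
theorem stmt_7 {Ω X : Type*} {m : MeasurableSpace Ω} (μ : @MeasureTheory.Measure Ω m)
    [IsProbabilityMeasure μ]
    [NormedAddCommGroup X] [NormedSpace ℝ X] [CompleteSpace X]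
    [TopologicalSpace.SeparableSpace X] [MeasurableSpace X] [BorelSpace X]
    (F : Ω → Set X) (hF : IsSVRV m F) (hconv : ∀ ω, Convex ℝ (F ω))
    (hbdd : ∃ ρ : Ω → ℝ, Integrable ρ μ ∧ ∀ ω, ∀ x ∈ F ω, ‖x‖ ≤ ρ ω)
    (hsing : ∃ x₀ : X, aumannExp μ F = {x₀}) :
    ∀ᵐ ω ∂μ, ∃ x : X, F ω = {x} := by
  classical
  obtain ⟨x₀, hx₀⟩ := hsing
  have hInt : ∀ f ∈ sel m μ 1 F, ∫ ω, f ω ∂μ = x₀ := by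
    intro f hf
    have h1 : (∫ ω, f ω ∂μ) ∈ aumannExp μ F := subset_closure ⟨f, hf, rfl⟩
    rw [hx₀] at h1; exact h1
  obtain ⟨f₀, hf₀⟩ : ∃ f : Lp X 1 μ, f ∈ sel m μ 1 F := by
    have h1 : x₀ ∈ aumannExp μ F := by rw [hx₀]; exact rfl
    have h2 : {x | ∃ f ∈ sel m μ 1 F, ∫ ω, f ω ∂μ = x}.Nonempty := by
      rw [← closure_nonempty_iff]; exact ⟨x₀, h1⟩
    obtain ⟨y, f, hf, _⟩ := h2
    exact ⟨f, hf⟩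
  set φ := (Lp.aestronglyMeasurable f₀).mk f₀ with hφ_def
  have hsm : StronglyMeasurable φ := (Lp.aestronglyMeasurable f₀).stronglyMeasurable_mk
  have heq : ⇑f₀ =ᵐ[μ] φ := (Lp.aestronglyMeasurable f₀).ae_eq_mk
  have hφF : ∀ᵐ ω ∂μ, φ ω ∈ F ω := by
    filter_upwards [hf₀.2, heq] with ω h1 h2
    rw [← h2]; exact h1
  have hφint : Integrable φ μ := (L1.integrable_coeFn f₀).congr heq
  have hφx₀ : ∫ ω, φ ω ∂μ = x₀ := by
    rw [← integral_congr_ae heq]; exact hInt f₀ hf₀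
  by_contra hcon
  have hT : ¬ ∀ᵐ ω ∂μ, ∀ x ∈ F ω, x = φ ω := by
    intro hae
    apply hcon
    filter_upwards [hae, hφF] with ω h1 h2
    exact ⟨φ ω, Set.Subset.antisymm (fun x hx => h1 x hx) (Set.singleton_subset_iff.mpr h2)⟩
  have hΩ : Nonempty Ω := by
    by_contra hO
    rw [not_nonempty_iff] at hO
    have h1 : μ Set.univ = 1 := measure_univ
    rw [Set.univ_eq_empty_iff.mpr hO, measure_empty] at h1
    exact one_ne_zero h1.symm
  have hX : Nonempty X := ⟨((hF.1 (Classical.arbitrary Ω)).1).some⟩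
  haveI : SecondCountableTopology X := UniformSpace.secondCountable_of_separable X
  set e := TopologicalSpace.denseSeq X with he_def
  have he : DenseRange e := TopologicalSpace.denseRange_denseSeq X
  set T : ℕ → ℕ → Set Ω := fun n k =>
    {ω | (F ω ∩ Metric.closedBall (e n) ((1/2:ℝ)^k)).Nonempty} ∩
      {ω | 3*(1/2:ℝ)^k ≤ dist (φ ω) (e n)} with hT_def
  have hTmeas : ∀ n k, MeasurableSet (T n k) := by
    intro n k
    refine (hF.2 _ Metric.isClosed_closedBall).inter ?_
    exact measurableSet_le measurable_const ((hsm.measurable).dist measurable_const)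
  have hcover : {ω | ∃ x ∈ F ω, x ≠ φ ω} ⊆ ⋃ n, ⋃ k, T n k := by
    rintro ω ⟨x, hxF, hxne⟩
    have hd : 0 < dist x (φ ω) := dist_pos.mpr hxne
    obtain ⟨k, hk⟩ := exists_pow_lt_of_lt_one (show 0 < dist x (φ ω) / 4 by positivity)
      (show (1/2:ℝ) < 1 by norm_num)
    obtain ⟨n, hn⟩ := he.exists_dist_lt x (show 0 < (1/2:ℝ)^k by positivity)
    refine Set.mem_iUnion.mpr ⟨n, Set.mem_iUnion.mpr ⟨k, ⟨⟨x, hxF, ?_⟩, ?_⟩⟩⟩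
    · rw [Metric.mem_closedBall]; exact hn.le
    · show 3*(1/2:ℝ)^k ≤ dist (φ ω) (e n)
      have h1 : dist x (φ ω) ≤ dist x (e n) + dist (e n) (φ ω) := dist_triangle _ _ _
      rw [dist_comm (e n) (φ ω)] at h1
      have h2 : 4 * (1/2:ℝ)^k < dist x (φ ω) := by linarith [hk]
      linarith [hn]
  obtain ⟨n, k, hμA⟩ : ∃ n k, μ (T n k) ≠ 0 := by
    by_contra hz
    push_neg at hz
    apply hT
    have hU : μ (⋃ n, ⋃ k, T n k) = 0 := by
      rw [measure_iUnion_null_iff]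
      intro n
      rw [measure_iUnion_null_iff]
      exact hz n
    rw [ae_iff]
    refine measure_mono_null (fun ω hω => ?_) hU
    simp only [Set.mem_setOf_eq] at hω
    push_neg at hω
    exact hcover hω
  set δ : ℝ := (1/2:ℝ)^k with hδ_def
  have hδ : 0 < δ := by positivity
  set c := e n with hc_def
  set A := T n k with hA_def
  have hAmeas : MeasurableSet A := hTmeas n k
  have hA1 : ∀ ω ∈ A, (F ω ∩ Metric.closedBall c δ).Nonempty := fun ω hω => hω.1
  have hA2 : ∀ ω ∈ A, 3*δ ≤ dist (φ ω) c := fun ω hω => hω.2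
  set G : Ω → Set X := fun ω => if ω ∈ A then F ω ∩ Metric.closedBall c δ else {c} with hG_def
  have hGne : ∀ ω, (G ω).Nonempty := by
    intro ω
    by_cases hω : ω ∈ A
    · simp only [hG_def, if_pos hω]; exact hA1 ω hω
    · simp only [hG_def, if_neg hω]; exact ⟨c, rfl⟩
  have hGcl : ∀ ω, IsClosed (G ω) := by
    intro ω
    by_cases hω : ω ∈ A
    · simp only [hG_def, if_pos hω]; exact (hF.1 ω).2.inter Metric.isClosed_closedBall
    · simp only [hG_def, if_neg hω]; exact isClosed_singleton
  have hGmeas : ∀ C : Set X, IsClosed C → MeasurableSet {ω | (G ω ∩ C).Nonempty} := by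
    intro C hC
    have heq2 : {ω | (G ω ∩ C).Nonempty} =
        (A ∩ {ω | (F ω ∩ (Metric.closedBall c δ ∩ C)).Nonempty}) ∪
        (Aᶜ ∩ (if c ∈ C then Set.univ else (∅ : Set Ω))) := by
      ext ω
      by_cases hω : ω ∈ A
      · simp [hG_def, hω, Set.inter_assoc]
      · by_cases hc : c ∈ C <;>
          simp [hG_def, hω, hc, Set.singleton_inter_nonempty]
    rw [heq2]
    refine ((hAmeas.inter (hF.2 _ (Metric.isClosed_closedBall.inter hC)))).union
      (hAmeas.compl.inter ?_)
    split
    · exact MeasurableSet.univ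
    · exact MeasurableSet.empty
  obtain ⟨h, hhm, hhG⟩ := krn_selection G hGne hGcl hGmeas
  have hhball : ∀ ω, h ω ∈ Metric.closedBall c δ := by
    intro ω
    have h1 := hhG ω
    by_cases hω : ω ∈ A
    · simp only [hG_def, if_pos hω] at h1; exact h1.2
    · simp only [hG_def, if_neg hω, Set.mem_singleton_iff] at h1
      rw [h1]; exact Metric.mem_closedBall_self hδ.le
  have hhint : Integrable h μ := by
    refine ⟨hhm.aestronglyMeasurable, ?_⟩
    apply HasFiniteIntegral.of_bounded (C := ‖c‖ + δ)
    filter_upwards with ω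
    have h1 := hhball ω
    rw [Metric.mem_closedBall, dist_eq_norm] at h1
    calc ‖h ω‖ = ‖(h ω - c) + c‖ := by rw [sub_add_cancel]
      _ ≤ ‖h ω - c‖ + ‖c‖ := norm_add_le _ _
      _ ≤ δ + ‖c‖ := add_le_add_left h1 _
      _ = ‖c‖ + δ := add_comm _ _
  have hsel2 : ∀ B : Set Ω, MeasurableSet B → B ⊆ A →
      ∫ ω, (B.piecewise h φ) ω ∂μ = x₀ := by
    intro B hB hBA
    have hgBsm : StronglyMeasurable (B.piecewise h φ) := hhm.piecewise hB hsm
    have hgBint : Integrable (B.piecewise h φ) μ :=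
      MeasureTheory.Integrable.piecewise hB hhint.integrableOn hφint.integrableOn
    have hgBF : ∀ᵐ ω ∂μ, (B.piecewise h φ) ω ∈ F ω := by
      filter_upwards [hφF] with ω hφω
      by_cases hω : ω ∈ B
      · rw [Set.piecewise_eq_of_mem _ _ _ hω]
        have hωA := hBA hω
        have h1 := hhG ω
        simp only [hG_def, if_pos hωA] at h1
        exact h1.1
      · rw [Set.piecewise_eq_of_notMem _ _ _ hω]; exact hφω
    have hmem : MemLp (B.piecewise h φ) 1 μ := memLp_one_iff_integrable.mpr hgBint
    have hmemS : hmem.toLp _ ∈ sel m μ 1 F := by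
      constructor
      · exact ⟨B.piecewise h φ, hgBsm, hmem.coeFn_toLp⟩
      · filter_upwards [hmem.coeFn_toLp, hgBF] with ω h1 h2
        rw [h1]; exact h2
    have h3 := hInt _ hmemS
    rwa [integral_congr_ae hmem.coeFn_toLp] at h3
  -- deduce set integrals equal
  have hseteq : ∀ B : Set Ω, MeasurableSet B → B ⊆ A →
      ∫ ω in B, h ω ∂μ = ∫ ω in B, φ ω ∂μ := by
    intro B hB hBA
    have h1 := hsel2 B hB hBA
    have hgBint : Integrable (B.piecewise h φ) μ :=
      MeasureTheory.Integrable.piecewise hB hhint.integrableOn hφint.integrableOn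
    rw [← integral_add_compl hB hgBint] at h1
    have e1 : ∫ x in B, B.piecewise h φ x ∂μ = ∫ x in B, h x ∂μ :=
      setIntegral_congr_fun hB (fun ω hω => Set.piecewise_eq_of_mem _ _ _ hω)
    have e2 : ∫ x in Bᶜ, B.piecewise h φ x ∂μ = ∫ x in Bᶜ, φ x ∂μ :=
      setIntegral_congr_fun hB.compl (fun ω hω => Set.piecewise_eq_of_notMem _ _ _ hω)
    rw [e1, e2] at h1
    have h2 : ∫ ω in B, φ ω ∂μ + ∫ ω in Bᶜ, φ ω ∂μ = x₀ := by
      rw [integral_add_compl hB hφint]; exact hφx₀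
    have h4 : ∫ ω in Bᶜ, φ ω ∂μ = ∫ ω in Bᶜ, φ ω ∂μ := rfl
    have := h1.trans h2.symm
    exact add_right_cancel this
  -- h =ᵐ[μ.restrict A] φ
  have haeA : h =ᵐ[μ.restrict A] φ := by
    apply ae_eq_of_forall_setIntegral_eq_of_sigmaFinite
    · exact fun s hs _ => hhint.restrict.restrict
    · exact fun s hs _ => hφint.restrict.restrict
    · intro s hs _
      rw [Measure.restrict_restrict hs]
      exact hseteq (s ∩ A) (hs.inter hAmeas) Set.inter_subset_right
  have hAsub : A ⊆ {ω | h ω ≠ φ ω} := by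
    intro ω hω
    have h1 : 3*δ ≤ dist (φ ω) c := hA2 ω hω
    have h2 : dist (h ω) c ≤ δ := hhball ω
    intro heqq
    rw [← heqq] at h1
    have h3 : dist (h ω) c ≥ 3*δ - 0 := by
      have := dist_triangle (φ ω) (h ω) c
      linarith [dist_nonneg (x := φ ω) (y := h ω), h1]
    linarith
  have hne0 : μ.restrict A {ω | h ω ≠ φ ω} = 0 := by
    rw [← ae_iff] at *
    exact haeA
  have : μ.restrict A A = 0 := measure_mono_null hAsub hne0
  rw [Measure.restrict_apply_self] at this
  exact hμA this
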